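/- arXiv:2312.09185 — 2 statements merged into one kernel-verified Lean document; each statement's English description precedes it below -/
import Mathlib

section
/- Let 1 ≤ q₋ < r < q₊ ≤ ∞ and let {f_z : z = (w,t) ∈ ℝ^d × (0,∞)} be a family of functions in L^{q₋}(ℝ^d) ∩ L^{q₊}(ℝ^d) such that (i) ‖f_z‖_{L^r} is uniformly bounded, (ii) there exists β > 0 with ‖f_z‖_{L^{q₋}} ≲ t^β and ‖f_z‖_{L^{q₊}} ≲ t^{-β}, and (iii) there exists c > 0 such that |f_z(x)| ≲ t^{-d/r} (1 + |x-w|²/t²)^{-1/2} whenever |x-w| ≥ c·t. Then for every g ∈ L^{r'}(ℝ^d) (with 1/r + 1/r' = 1), the pairing ⟨f_z, g⟩ = ∫ f_z g tends to 0 as z → ∞, i.e. for every ε > 0 there exists M such that |⟨f_z,g⟩| < ε whenever t < 2^{-M}, or t > 2^M, or |w| > 2^M. -/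
/-!
By density of compactly supported continuous functions in `L^{r'}` and the uniform `L^r` bound,
it suffices to pair with a compactly supported continuous `g`. For such `g`, Hölder's inequality
with the conjugates of `q₋` and `q₊` gives `|⟨f_z, g⟩| ≲ min (t^β, t^{-β})`, which is small unless
`t` lies in a compact range `[a, b] ⊆ (0, ∞)`. For `t` in that range and `|w|` large, the support
of `g` lies in the region `|x - w| ≥ c t`, where the decay bound gives `|f_z| ≲ 1 / |x - w|`.
-/

open MeasureTheory Real Filter Topology
open scoped ENNReal

section Lp

variable {α E : Type*} [MeasurableSpace α] {μ : Measure α} [NormedAddCommGroup E]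

theorem abs_integral_mul_le_eLpNorm_mul_eLpNorm {p q : ℝ≥0∞} [p.HolderConjugate q]
    {u v : α → ℝ} (hu : MemLp u p μ) (hv : MemLp v q μ) :
    |∫ x, u x * v x ∂μ| ≤ (eLpNorm u p μ).toReal * (eLpNorm v q μ).toReal := by
  have hint : Integrable (fun x => u x * v x) μ := hu.integrable_mul hv
  have hHolder : eLpNorm (fun x => u x * v x) 1 μ ≤ eLpNorm u p μ * eLpNorm v q μ := by
    simpa using eLpNorm_le_eLpNorm_mul_eLpNorm_of_nnnorm hu.1 hv.1 (· * ·) 1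
      (.of_forall fun x => by simp [nnnorm_mul])
  calc |∫ x, u x * v x ∂μ| ≤ ∫ x, ‖u x * v x‖ ∂μ :=
        norm_integral_le_integral_norm (fun x => u x * v x)
    _ = (eLpNorm (fun x => u x * v x) 1 μ).toReal := by
      rw [integral_norm_eq_lintegral_enorm hint.1, eLpNorm_one_eq_lintegral_enorm]
    _ ≤ _ := by
      rw [← ENNReal.toReal_mul]
      exact ENNReal.toReal_mono (ENNReal.mul_ne_top hu.2.ne hv.2.ne) hHolder

theorem MeasureTheory.MemLp.of_exponent_between {f : α → E} {p q r : ℝ≥0∞} (hp : p ≠ 0)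
    (hfp : MemLp f p μ) (hfq : MemLp f q μ) (hpr : p ≤ r) (hrq : r ≤ q) : MemLp f r μ := by
  rcases eq_or_ne r ∞ with rfl | hr
  · rwa [top_le_iff.1 hrq] at hfq
  have hp_top : p ≠ ∞ := ne_top_of_le_ne_top hr hpr
  wlog hf : StronglyMeasurable f generalizing f
  · exact (this (hfp.ae_eq hfp.1.ae_eq_mk) (hfq.ae_eq hfp.1.ae_eq_mk)
      hfp.1.stronglyMeasurable_mk).ae_eq hfp.1.ae_eq_mk.symm
  -- split `f` where `‖f‖ ≥ 1` (a set of finite measure) and where `‖f‖ < 1`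
  set S : Set α := {x | 1 ≤ ‖f x‖ₑ}
  have hS : MeasurableSet S := hf.enorm measurableSet_Ici
  have hS_fin : μ S < ∞ := by simpa using hfp.meas_ge_lt_top_enorm hp hp_top one_ne_zero
  have hlarge : MemLp (S.indicator f) r μ :=
    (hfq.indicator hS).mono_exponent_of_measure_support_ne_top
      (fun x hx => Set.indicator_of_notMem hx f) hS_fin.ne hrq
  have hsmall : MemLp (Sᶜ.indicator f) r μ := by
    have hle : ∀ x, ‖Sᶜ.indicator f x‖ₑ ≤ 1 := fun x => by
      by_cases hx : x ∈ S
      · simp [hx]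
      · simpa [hx] using (not_le.1 hx).le
    have hr0 : r ≠ 0 := (pos_iff_ne_zero.2 hp |>.trans_le hpr).ne'
    have hint : ∫⁻ x, ‖Sᶜ.indicator f x‖ₑ ^ r.toReal ∂μ < ∞ := calc
      _ ≤ ∫⁻ x, ‖Sᶜ.indicator f x‖ₑ ^ p.toReal ∂μ := lintegral_mono fun x =>
        ENNReal.rpow_le_rpow_of_exponent_ge (hle x) (ENNReal.toReal_mono hr hpr)
      _ < ∞ := lintegral_rpow_enorm_lt_top_of_eLpNorm_lt_top hp hp_top
        (hfp.indicator hS.compl).2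
    refine ⟨(hf.indicator hS.compl).aestronglyMeasurable, ?_⟩
    rw [eLpNorm_eq_lintegral_rpow_enorm_toReal hr0 hr]
    exact ENNReal.rpow_lt_top_of_nonneg (by positivity) hint.ne
  simpa [Set.indicator_self_add_compl] using hlarge.add hsmall

end Lp

theorem tendsto_integral_mul_of_forall_hasCompactSupport {α ι : Type*} [TopologicalSpace α]
    [NormalSpace α] [R1Space α] [WeaklyLocallyCompactSpace α] [MeasurableSpace α] [BorelSpace α]
    {μ : Measure α} [μ.Regular] {l : Filter ι} {f : ι → α → ℝ} {r r' : ℝ≥0∞}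
    [r.HolderConjugate r'] (hr' : r' ≠ ∞) {A : ℝ}
    (hf : ∀ᶠ i in l, MemLp (f i) r μ ∧ (eLpNorm (f i) r μ).toReal ≤ A)
    (hcpt : ∀ g₁ : α → ℝ, Continuous g₁ → HasCompactSupport g₁ →
      Tendsto (fun i => ∫ x, f i x * g₁ x ∂μ) l (𝓝 0))
    {g : α → ℝ} (hg : MemLp g r' μ) :
    Tendsto (fun i => ∫ x, f i x * g x ∂μ) l (𝓝 0) := by
  refine Metric.tendsto_nhds.2 fun ε hε => ?_
  obtain ⟨δ, hδ, hAδ⟩ : ∃ δ > 0, |A| * δ < ε / 2 := ⟨ε / (2 * (|A| + 1)), by positivity, by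
    rw [← mul_div_assoc, div_lt_div_iff₀ (by positivity) two_pos]
    nlinarith [abs_nonneg A]⟩
  obtain ⟨g₁, hg₁_supp, hg_sub, hg₁_cont, hg₁⟩ :=
    hg.exists_hasCompactSupport_eLpNorm_sub_le hr' (ENNReal.ofReal_pos.2 hδ).ne'
  filter_upwards [hf, Metric.tendsto_nhds.1 (hcpt g₁ hg₁_cont hg₁_supp) _ (half_pos hε)]
    with i ⟨hfi, hAi⟩ hi
  rw [dist_zero_right, Real.norm_eq_abs] at hi ⊢
  have hsplit : ∫ x, f i x * g x ∂μ = ∫ x, f i x * (g - g₁) x ∂μ + ∫ x, f i x * g₁ x ∂μ := by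
    have hint_sub : Integrable (fun x => f i x * (g - g₁) x) μ := hfi.integrable_mul (hg.sub hg₁)
    have hint₁ : Integrable (fun x => f i x * g₁ x) μ := hfi.integrable_mul hg₁
    rw [← integral_add hint_sub hint₁]
    simp only [Pi.sub_apply, mul_sub, sub_add_cancel]
  have herr : |∫ x, f i x * (g - g₁) x ∂μ| ≤ |A| * δ :=
    (abs_integral_mul_le_eLpNorm_mul_eLpNorm hfi (hg.sub hg₁)).trans <|
      mul_le_mul (hAi.trans (le_abs_self A)) (ENNReal.toReal_le_of_le_ofReal hδ.le hg_sub)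
        ENNReal.toReal_nonneg (abs_nonneg A)
  calc |∫ x, f i x * g x ∂μ| ≤ |∫ x, f i x * (g - g₁) x ∂μ| + |∫ x, f i x * g₁ x ∂μ| := by
        rw [hsplit]; exact abs_add_le _ _
    _ < ε / 2 + ε / 2 := add_lt_add_of_le_of_lt (herr.trans hAδ.le) hi
    _ = ε := add_halves ε

theorem one_add_sq_div_sq_rpow_neg_half_le {s t : ℝ} (hs : 0 < s) (ht : 0 < t) :
    (1 + s ^ 2 / t ^ 2) ^ (-(1 : ℝ) / 2) ≤ t / s := calc
  (1 + s ^ 2 / t ^ 2) ^ (-(1 : ℝ) / 2) ≤ ((s / t) ^ (2 : ℝ)) ^ (-(1 : ℝ) / 2) := by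
    rw [rpow_two, div_pow]
    exact rpow_le_rpow_of_nonpos (by positivity) (le_add_of_nonneg_left zero_le_one) (by norm_num)
  _ = t / s := by
    rw [← rpow_mul (by positivity)]
    norm_num [rpow_neg_one]

theorem exists_pos_forall_rpow_lt {β : ℝ} (hβ : 0 < β) (a b : ℝ) {ε : ℝ} (hε : 0 < ε) :
    ∃ η > 0, ∀ t > 0, (t < η → a * t ^ β < ε) ∧ (η⁻¹ < t → b * t ^ (-β) < ε) := by
  have hzero : Tendsto (fun t : ℝ => a * t ^ β) (𝓝 0) (𝓝 0) := by
    simpa [zero_rpow hβ.ne'] using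
      ((continuousAt_id.rpow_const (Or.inr hβ.le)).tendsto (x := (0 : ℝ))).const_mul a
  have htop : Tendsto (fun t : ℝ => b * t ^ (-β)) atTop (𝓝 0) := by
    simpa using (tendsto_rpow_neg_atTop hβ).const_mul b
  obtain ⟨δ, hδ, hsmall⟩ := Metric.eventually_nhds_iff.1 (hzero.eventually (gt_mem_nhds hε))
  obtain ⟨T, hlarge⟩ := eventually_atTop.1 (htop.eventually (gt_mem_nhds hε))
  refine ⟨min δ (max T 1)⁻¹, by positivity, fun t ht =>
    ⟨fun htη => hsmall ?_, fun htη => hlarge t ?_⟩⟩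
  · rw [Real.dist_eq, sub_zero, abs_of_pos ht]
    exact htη.trans_le (min_le_left _ _)
  · refine (le_max_left T 1).trans (le_of_lt (lt_of_le_of_lt ?_ htη))
    rw [le_inv_comm₀ (by positivity) (by positivity)]
    exact min_le_right _ _

/-- The part of the upper half-space outside the hyperbolic ball `𝔹_M`. -/
def hypBallCompl (E : Type*) [Norm E] (M : ℝ) : Set (E × ℝ) :=
  {z | 0 < z.2 ∧ (z.2 < 2 ^ (-M) ∨ 2 ^ M < z.2 ∨ 2 ^ M < ‖z.1‖)}

def atHypInfty (E : Type*) [Norm E] : Filter (E × ℝ) :=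
  ⨅ M : ℝ, 𝓟 (hypBallCompl E M)

section HypInfty

variable {E : Type*} [Norm E]

theorem antitone_hypBallCompl : Antitone (hypBallCompl E) := by
  intro M M' h z ⟨ht, hz⟩
  have hneg : (2 : ℝ) ^ (-M') ≤ 2 ^ (-M) := rpow_le_rpow_of_exponent_le one_le_two (neg_le_neg h)
  have hpos : (2 : ℝ) ^ M ≤ 2 ^ M' := rpow_le_rpow_of_exponent_le one_le_two h
  refine ⟨ht, ?_⟩
  rcases hz with hz | hz | hz
  · exact Or.inl (hz.trans_le hneg)
  · exact Or.inr (Or.inl (hpos.trans_lt hz))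
  · exact Or.inr (Or.inr (hpos.trans_lt hz))

theorem eventually_atHypInfty_iff {p : E × ℝ → Prop} :
    (∀ᶠ z in atHypInfty E, p z) ↔
      ∃ M : ℝ, ∀ w t, 0 < t → (t < 2 ^ (-M) ∨ 2 ^ M < t ∨ 2 ^ M < ‖w‖) → p (w, t) := by
  rw [atHypInfty, (hasBasis_iInf_principal
    (directed_of_isDirected_le fun _ _ h => antitone_hypBallCompl h)).eventually_iff]
  simp only [true_and, Prod.forall, hypBallCompl, Set.mem_ofPred_eq, and_imp]

theorem tendsto_atHypInfty_nhds_zero_iff {F : E × ℝ → ℝ} :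
    Tendsto F (atHypInfty E) (𝓝 0) ↔ ∀ ε > 0, ∃ M : ℝ, ∀ w t, 0 < t →
      (t < 2 ^ (-M) ∨ 2 ^ M < t ∨ 2 ^ M < ‖w‖) → |F (w, t)| < ε := by
  simp only [Metric.tendsto_nhds, eventually_atHypInfty_iff, dist_zero_right, Real.norm_eq_abs]

theorem eventually_pos_atHypInfty : ∀ᶠ z in atHypInfty E, 0 < z.2 :=
  eventually_atHypInfty_iff.2 ⟨0, fun _ _ ht _ => ht⟩

theorem tendsto_atHypInfty_of_rpow_bounds {F : E × ℝ → ℝ} {β a b : ℝ} (hβ : 0 < β)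
    (hsmall : ∀ w t, 0 < t → |F (w, t)| ≤ a * t ^ β)
    (hlarge : ∀ w t, 0 < t → |F (w, t)| ≤ b * t ^ (-β))
    (hspace : ∀ ε > 0, ∀ a > 0, ∀ b : ℝ,
      ∃ R, ∀ w t, a ≤ t → t ≤ b → R < ‖w‖ → |F (w, t)| < ε) :
    Tendsto F (atHypInfty E) (𝓝 0) := by
  refine tendsto_atHypInfty_nhds_zero_iff.2 fun ε hε => ?_
  obtain ⟨η, hη, hη_bound⟩ := exists_pos_forall_rpow_lt hβ a b hε
  set M₀ := |logb 2 η|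
  have hη_le : (2 : ℝ) ^ (-M₀) ≤ η := by
    conv_rhs => rw [← rpow_logb two_pos (by norm_num) hη]
    exact rpow_le_rpow_of_exponent_le one_le_two (neg_abs_le _)
  have hη_inv_le : η⁻¹ ≤ 2 ^ M₀ := by
    rw [← rpow_logb two_pos (by norm_num) hη, ← rpow_neg zero_le_two]
    exact rpow_le_rpow_of_exponent_le one_le_two (neg_le_abs _)
  obtain ⟨R, hR⟩ := hspace ε hε (2 ^ (-M₀)) (rpow_pos_of_pos two_pos _) (2 ^ M₀)
  set M := max M₀ (logb 2 (max R 1))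
  have hM₀ : M₀ ≤ M := le_max_left _ _
  have hRM : R ≤ 2 ^ M := calc
    R ≤ max R 1 := le_max_left _ _
    _ = 2 ^ logb 2 (max R 1) := (rpow_logb two_pos (by norm_num) (by positivity)).symm
    _ ≤ 2 ^ M := rpow_le_rpow_of_exponent_le one_le_two (le_max_right _ _)
  refine ⟨M, fun w t ht hz => ?_⟩
  by_cases hsmall_t : t < 2 ^ (-M₀)
  · exact (hsmall w t ht).trans_lt ((hη_bound t ht).1 (hsmall_t.trans_le hη_le))
  by_cases hlarge_t : 2 ^ M₀ < t
  · exact (hlarge w t ht).trans_lt ((hη_bound t ht).2 (hη_inv_le.trans_lt hlarge_t))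
  push Not at hsmall_t hlarge_t
  refine hR w t hsmall_t hlarge_t (hRM.trans_lt ?_)
  rcases hz with hz | hz | hz
  · exact absurd (hz.trans_le (rpow_le_rpow_of_exponent_le one_le_two (neg_le_neg hM₀)))
      hsmall_t.not_gt
  · exact absurd ((rpow_le_rpow_of_exponent_le one_le_two hM₀).trans_lt hz) hlarge_t.not_gt
  · exact hz

end HypInfty

theorem abs_integral_mul_lt_of_decay {E : Type*} [NormedAddCommGroup E] [MeasurableSpace E]
    {μ : Measure E} {f : E × ℝ → E → ℝ} {g : E → ℝ} (hg : Integrable g μ)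
    (hg_bdd : Bornology.IsBounded (Function.support g)) {c C γ : ℝ}
    (hdecay : ∀ w t x, 0 < t → c * t ≤ ‖x - w‖ →
      |f (w, t) x| ≤ C * t ^ γ * (1 + ‖x - w‖ ^ 2 / t ^ 2) ^ (-(1 : ℝ) / 2))
    {ε : ℝ} (hε : 0 < ε) {a : ℝ} (ha : 0 < a) (b : ℝ) :
    ∃ R, ∀ w t, a ≤ t → t ≤ b → R < ‖w‖ → |∫ x, f (w, t) x * g x ∂μ| < ε := by
  obtain ⟨R₀, hR₀⟩ := isBounded_iff_forall_norm_le.1 hg_bdd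
  have hcont : ContinuousOn (fun t => |C| * t ^ γ * t) (Set.Icc a b) :=
    (continuousOn_const.mul (continuousOn_id.rpow_const fun t ht =>
      Or.inl (ha.trans_le ht.1).ne')).mul continuousOn_id
  obtain ⟨K, hK⟩ := isCompact_Icc.bddAbove_image hcont
  set K' := max K 0
  set N := ∫ x, |g x| ∂μ
  refine ⟨R₀ + |c| * b + K' * N / ε, fun w t hat htb hw => ?_⟩
  have ht : 0 < t := ha.trans_le hat
  set D := ‖w‖ - R₀
  have hcb : 0 ≤ |c| * b := mul_nonneg (abs_nonneg c) (ht.le.trans htb)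
  have hKN : 0 ≤ K' * N / ε := by positivity
  have hND : K' * N / ε < D := by linarith
  have hcD : |c| * b < D := by linarith
  have hD : 0 < D := hcb.trans_lt hcD
  have hpt : ∀ x, ‖f (w, t) x * g x‖ ≤ K' / D * |g x| := by
    intro x
    by_cases hgx : g x = 0
    · simp [hgx]
    have hdist : D ≤ ‖x - w‖ := by
      have := hR₀ x hgx
      have := norm_sub_norm_le w x
      rw [norm_sub_rev] at this; linarith
    have hct : c * t ≤ ‖x - w‖ := calc
      c * t ≤ |c| * b := mul_le_mul (le_abs_self c) htb ht.le (abs_nonneg c)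
      _ ≤ ‖x - w‖ := hcD.le.trans hdist
    rw [norm_mul, Real.norm_eq_abs, Real.norm_eq_abs]
    refine mul_le_mul_of_nonneg_right ?_ (abs_nonneg _)
    calc |f (w, t) x| ≤ C * t ^ γ * (1 + ‖x - w‖ ^ 2 / t ^ 2) ^ (-(1 : ℝ) / 2) :=
          hdecay w t x ht hct
      _ ≤ |C| * t ^ γ * (t / ‖x - w‖) := by
        gcongr
        · exact le_abs_self C
        · exact one_add_sq_div_sq_rpow_neg_half_le (hD.trans_le hdist) ht
      _ = |C| * t ^ γ * t / ‖x - w‖ := by ring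
      _ ≤ K' / D := by
        gcongr
        exact (hK ⟨t, ⟨hat, htb⟩, rfl⟩).trans (le_max_left K 0)
  calc |∫ x, f (w, t) x * g x ∂μ| ≤ ∫ x, K' / D * |g x| ∂μ :=
        norm_integral_le_of_norm_le (hg.abs.const_mul _) (.of_forall hpt)
    _ = K' / D * N := integral_const_mul _ _
    _ < ε := by
      rw [div_mul_eq_mul_div, div_lt_iff₀ hD]
      exact (div_lt_iff₀' hε).1 hND

theorem stmt0_general
    (d : ℕ)
    (qm qp r r' : ℝ≥0∞)
    (hq : 1 ≤ qm) (hqmr : qm < r) (hrqp : r < qp)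
    (hconj : 1 / r + 1 / r' = 1)
    (f : (EuclideanSpace ℝ (Fin d) × ℝ) → EuclideanSpace ℝ (Fin d) → ℝ)
    (hmem : ∀ w t, 0 < t → MemLp (f (w, t)) qm volume ∧ MemLp (f (w, t)) qp volume)
    (A : ℝ) (hA : ∀ w t, 0 < t → (eLpNorm (f (w, t)) r volume).toReal ≤ A)
    (β : ℝ) (hβ : 0 < β) (C₂ : ℝ)
    (hlow : ∀ w t, 0 < t → (eLpNorm (f (w, t)) qm volume).toReal ≤ C₂ * t ^ β)
    (hhigh : ∀ w t, 0 < t → (eLpNorm (f (w, t)) qp volume).toReal ≤ C₂ * t ^ (-β))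
    (c : ℝ) (C₃ : ℝ)
    (hdecay : ∀ w t x, 0 < t → c * t ≤ ‖x - w‖ →
      |f (w, t) x| ≤ C₃ * t ^ (-((d : ℝ) / r.toReal)) * (1 + ‖x - w‖ ^ 2 / t ^ 2) ^ (-(1 : ℝ) / 2))
    (g : EuclideanSpace ℝ (Fin d) → ℝ) (hg : MemLp g r' volume) :
    ∀ ε > 0, ∃ M : ℝ, ∀ w t, 0 < t →
      (t < 2 ^ (-M) ∨ 2 ^ M < t ∨ 2 ^ M < ‖w‖) →
      |∫ x, f (w, t) x * g x| < ε := by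
  have hr_one : 1 < r := hq.trans_lt hqmr
  have : r.HolderConjugate r' := ⟨by simpa [one_div] using hconj⟩
  have hr'_top : r' ≠ ∞ := (ENNReal.HolderConjugate.ne_top_iff_ne_one r' r).2 hr_one.ne'
  have := ENNReal.HolderConjugate.conjExponent hq
  have := ENNReal.HolderConjugate.conjExponent (hr_one.trans hrqp).le
  have hf_r : ∀ w t, 0 < t → MemLp (f (w, t)) r volume := fun w t ht =>
    (hmem w t ht).1.of_exponent_between (zero_lt_one.trans_le hq).ne' (hmem w t ht).2
      hqmr.le hrqp.le
  refine tendsto_atHypInfty_nhds_zero_iff.1 <|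
    tendsto_integral_mul_of_forall_hasCompactSupport (r := r) (A := A) hr'_top ?_
      (fun g₁ hg₁ hg₁_supp => ?_) hg
  · filter_upwards [eventually_pos_atHypInfty] with ⟨w, t⟩ ht using ⟨hf_r w t ht, hA w t ht⟩
  have hg₁_mem (p : ℝ≥0∞) : MemLp g₁ p volume := hg₁.memLp_of_hasCompactSupport hg₁_supp
  have hsmall (w t) (ht : 0 < t) : |∫ x, f (w, t) x * g₁ x| ≤
      C₂ * (eLpNorm g₁ qm.conjExponent volume).toReal * t ^ β :=
    (abs_integral_mul_le_eLpNorm_mul_eLpNorm (hmem w t ht).1 (hg₁_mem _)).trans <| by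
      rw [mul_right_comm]; gcongr; exact hlow w t ht
  have hlarge (w t) (ht : 0 < t) : |∫ x, f (w, t) x * g₁ x| ≤
      C₂ * (eLpNorm g₁ qp.conjExponent volume).toReal * t ^ (-β) :=
    (abs_integral_mul_le_eLpNorm_mul_eLpNorm (hmem w t ht).2 (hg₁_mem _)).trans <| by
      rw [mul_right_comm]; gcongr; exact hhigh w t ht
  exact tendsto_atHypInfty_of_rpow_bounds hβ hsmall hlarge fun ε hε a ha b =>
    abs_integral_mul_lt_of_decay (memLp_one_iff_integrable.1 (hg₁_mem 1))
      (hg₁_supp.isBounded.subset (subset_tsupport g₁)) hdecay hε ha b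

/-- Weak convergence lemma: a family `f_z` uniformly bounded in `L^r`, small in
`L^{qm}`/`L^{qp}` at small/large scales, and pointwise decaying off `B(w, ct)`,
pairs to zero with any `g ∈ L^{r'}` as `z → ∞`. -/
theorem stmt0
    (d : ℕ) (hd : 1 ≤ d)
    (qm qp r r' : ℝ≥0∞)
    (hq : 1 ≤ qm) (hqmr : qm < r) (hrqp : r < qp)
    (hconj : 1 / r + 1 / r' = 1)
    (f : (EuclideanSpace ℝ (Fin d) × ℝ) → EuclideanSpace ℝ (Fin d) → ℝ)
    (hmem : ∀ w t, 0 < t → MemLp (f (w, t)) qm volume ∧ MemLp (f (w, t)) qp volume)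
    (A : ℝ) (hA : ∀ w t, 0 < t → (eLpNorm (f (w, t)) r volume).toReal ≤ A)
    (β : ℝ) (hβ : 0 < β) (C₂ : ℝ)
    (hlow : ∀ w t, 0 < t → (eLpNorm (f (w, t)) qm volume).toReal ≤ C₂ * t ^ β)
    (hhigh : ∀ w t, 0 < t → (eLpNorm (f (w, t)) qp volume).toReal ≤ C₂ * t ^ (-β))
    (c : ℝ) (hc : 0 < c) (C₃ : ℝ)
    (hdecay : ∀ w t x, 0 < t → c * t ≤ ‖x - w‖ →
      |f (w, t) x| ≤ C₃ * t ^ (-((d : ℝ) / r.toReal)) * (1 + ‖x - w‖ ^ 2 / t ^ 2) ^ (-(1 : ℝ) / 2))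
    (g : EuclideanSpace ℝ (Fin d) → ℝ) (hg : MemLp g r' volume) :
    ∀ ε > 0, ∃ M : ℝ, ∀ w t, 0 < t →
      (t < 2 ^ (-M) ∨ 2 ^ M < t ∨ 2 ^ M < ‖w‖) →
      |∫ x, f (w, t) x * g x| < ε :=
  stmt0_general d qm qp r r' hq hqmr hrqp hconj f hmem A hA β hβ C₂ hlow hhigh c C₃ hdecay g hg
end

section
/- Let K be a kernel on ℝ^{(m+1)d} minus the diagonal satisfying the smoothness bound: for h ∈ ℝ^d with 2|h| ≤ |x - 𝐱|₂, |K(x+h, 𝐱) - K(x, 𝐱)| ≤ C_K |h|^δ |x - 𝐱|₂^{-(md+δ)} for some δ ∈ (0,1]. Fix k ∈ {1,…,m}, w ∈ ℝ^d, t > 0, a ≥ 2, and bounded measurable functions g_1,…,g_m with |g_j| ≤ 1 and with g_k supported in {y : |y - w| ≥ a t}. Then for all x, y ∈ B(w,t), |∫_{ℝ^{md}} (K(x,𝐱) - K(y,𝐱)) ∏ g_j(x_j) d𝐱| ≤ C t^δ ∫_{|x_k - w| ≥ at/2} |x - 𝐱|₂^{-(md+δ)} d𝐱 ≤ C' a^{-δ},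 with C' depending only on C_K, δ, m, d. -/
open MeasureTheory Real Metric
open scoped ENNReal BigOperators

/-- Integrability and scaling of the tail integral `∫_{‖Z‖ ≥ R} ‖Z‖^{-p}`. -/
lemma aux_tail_integral {E : Type*} [NormedAddCommGroup E] [NormedSpace ℝ E]
    [MeasurableSpace E] [BorelSpace E] [FiniteDimensional ℝ E]
    (μ : Measure E) [μ.IsAddHaarMeasure]
    {p : ℝ} (hp : (Module.finrank ℝ E : ℝ) < p) :
    ∃ C0 ≥ 0, ∀ R : ℝ, 0 < R →
      Integrable ({Z : E | R ≤ ‖Z‖}.indicator (fun Z => ‖Z‖ ^ (-p))) μ ∧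
      ∫ Z, {Z : E | R ≤ ‖Z‖}.indicator (fun Z => ‖Z‖ ^ (-p)) Z ∂μ
        = C0 * R ^ ((Module.finrank ℝ E : ℝ) - p) := by
  have hp0 : 0 < p := lt_of_le_of_lt (Nat.cast_nonneg _) hp
  set F : E → ℝ := {u : E | 1 ≤ ‖u‖}.indicator (fun u => ‖u‖ ^ (-p)) with hF_def
  have hFmeas : Measurable F := by
    apply Measurable.indicator
    · fun_prop
    · exact isClosed_le continuous_const continuous_norm |>.measurableSet
  have hFnonneg : ∀ u, 0 ≤ F u :=
    fun u => Set.indicator_nonneg (fun v _ => Real.rpow_nonneg (norm_nonneg v) _) u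
  have hFle : ∀ u, F u ≤ (2:ℝ) ^ p * (1 + ‖u‖) ^ (-p) := by
    intro u
    rcases le_or_gt 1 ‖u‖ with h | h
    · have hFu : F u = ‖u‖ ^ (-p) :=
        Set.indicator_of_mem (show u ∈ {u : E | 1 ≤ ‖u‖} from h) _
      rw [hFu]
      have h1 : (1 + ‖u‖) / 2 ≤ ‖u‖ := by linarith
      have h2 : 0 < (1 + ‖u‖) / 2 := by positivity
      have := Real.rpow_le_rpow_of_nonpos h2 h1 (neg_nonpos.2 hp0.le)
      calc ‖u‖ ^ (-p) ≤ ((1 + ‖u‖) / 2) ^ (-p) := this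
        _ = (2:ℝ) ^ p * (1 + ‖u‖) ^ (-p) := by
            rw [Real.div_rpow (by positivity) zero_le_two,
              Real.rpow_neg zero_le_two, div_eq_mul_inv, inv_inv]
            ring
    · have hFu : F u = 0 :=
        Set.indicator_of_notMem (show u ∉ {u : E | 1 ≤ ‖u‖} by simpa using h.not_ge) _
      rw [hFu]; positivity
  have hFint : Integrable F μ := by
    refine ((integrable_one_add_norm (μ := μ) hp).const_mul ((2:ℝ) ^ p)).mono'
      hFmeas.aestronglyMeasurable ?_
    filter_upwards with u
    rw [Real.norm_eq_abs, abs_of_nonneg (hFnonneg u)]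
    exact hFle u
  refine ⟨∫ u, F u ∂μ, integral_nonneg hFnonneg, fun R hR => ?_⟩
  have hkey : ∀ Z : E, {Z : E | R ≤ ‖Z‖}.indicator (fun Z => ‖Z‖ ^ (-p)) Z
      = R ^ (-p) * F (R⁻¹ • Z) := by
    intro Z
    have hnorm : ‖R⁻¹ • Z‖ = R⁻¹ * ‖Z‖ := by
      rw [norm_smul, Real.norm_eq_abs, abs_of_pos (inv_pos.2 hR)]
    rcases le_or_gt R ‖Z‖ with h | h
    · have h1 : (1:ℝ) ≤ ‖R⁻¹ • Z‖ := by
        rw [hnorm]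
        rw [le_inv_mul_iff₀ hR]; simpa using h
      rw [Set.indicator_of_mem (show Z ∈ {Z : E | R ≤ ‖Z‖} from h) _, hF_def,
        Set.indicator_of_mem (show R⁻¹ • Z ∈ {u : E | 1 ≤ ‖u‖} from h1), hnorm,
        Real.mul_rpow (inv_nonneg.2 hR.le) (norm_nonneg Z), ← mul_assoc,
        ← Real.mul_rpow hR.le (inv_nonneg.2 hR.le), mul_inv_cancel₀ hR.ne',
        Real.one_rpow, one_mul]
    · have h1 : ¬ (1:ℝ) ≤ ‖R⁻¹ • Z‖ := by
        rw [hnorm, not_le]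
        rw [inv_mul_lt_iff₀ hR]; simpa using h
      rw [Set.indicator_of_notMem (show Z ∉ {Z : E | R ≤ ‖Z‖} by simpa using h.not_ge) _,
        hF_def,
        Set.indicator_of_notMem (show R⁻¹ • Z ∉ {u : E | 1 ≤ ‖u‖} by simpa using h1),
        mul_zero]
  have hcomp : Integrable (fun Z => F (R⁻¹ • Z)) μ :=
    hFint.comp_smul (inv_ne_zero hR.ne')
  constructor
  · have : Integrable (fun Z => R ^ (-p) * F (R⁻¹ • Z)) μ := hcomp.const_mul _
    exact this.congr (Filter.Eventually.of_forall fun Z => (hkey Z).symm)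
  · calc ∫ Z, {Z : E | R ≤ ‖Z‖}.indicator (fun Z => ‖Z‖ ^ (-p)) Z ∂μ
        = ∫ Z, R ^ (-p) * F (R⁻¹ • Z) ∂μ := by
          exact integral_congr_ae (Filter.Eventually.of_forall hkey)
      _ = R ^ (-p) * ∫ Z, F (R⁻¹ • Z) ∂μ := integral_const_mul _ _
      _ = R ^ (-p) * (|((R⁻¹) ^ Module.finrank ℝ E)⁻¹| • ∫ u, F u ∂μ) := by
          rw [Measure.integral_comp_smul μ F R⁻¹]
      _ = (∫ u, F u ∂μ) * R ^ ((Module.finrank ℝ E : ℝ) - p) := by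
          rw [inv_pow, inv_inv, abs_of_pos (pow_pos hR _), smul_eq_mul]
          rw [← Real.rpow_natCast R (Module.finrank ℝ E)]
          rw [← mul_assoc, ← Real.rpow_add hR]
          ring_nf

set_option maxHeartbeats 1000000 in
/-- Oscillation estimate from kernel Hölder smoothness: if `K` satisfies the CZ
smoothness bound in its first variable, `|g_j| ≤ 1`, and `g_k` vanishes on
`B(w, at)` (`a ≥ 2`), then for `x, y ∈ B(w,t)`,
`|∫ (K(x,X)-K(y,X)) ∏ g_j(X_j) dX| ≤ C' a^{-δ}`. -/
theorem stmt15
    (m d : ℕ) (hm : 1 ≤ m) (hd : 1 ≤ d) (δ CK : ℝ)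
    (hδ : 0 < δ) (hδ1 : δ ≤ 1) (hCK : 0 < CK)
    (K : EuclideanSpace ℝ (Fin d) → (Fin m → EuclideanSpace ℝ (Fin d)) → ℂ)
    (hK : ∀ (x h : EuclideanSpace ℝ (Fin d)) (X : Fin m → EuclideanSpace ℝ (Fin d)),
      2 * ‖h‖ ≤ Real.sqrt (∑ j, ‖x - X j‖ ^ 2) →
      ‖K (x + h) X - K x X‖
        ≤ CK * ‖h‖ ^ δ * (Real.sqrt (∑ j, ‖x - X j‖ ^ 2)) ^ (-((m : ℝ) * d + δ))) :
    ∃ C' > (0 : ℝ), ∀ (w : EuclideanSpace ℝ (Fin d)) (t a : ℝ)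
      (g : Fin m → EuclideanSpace ℝ (Fin d) → ℂ) (k : Fin m),
      0 < t → 2 ≤ a →
      (∀ j x, ‖g j x‖ ≤ 1) →
      (∀ y, ‖y - w‖ < a * t → g k y = 0) →
      ∀ x ∈ ball w t, ∀ y ∈ ball w t,
        ‖∫ X : Fin m → EuclideanSpace ℝ (Fin d),
            (K x X - K y X) * ∏ j, g j (X j)‖ ≤ C' * a ^ (-δ) := by
  classical
  set p : ℝ := (m : ℝ) * d + δ with hp_def
  have hp0 : 0 < p := by positivity
  have hrank :
      (Module.finrank ℝ (Fin m → EuclideanSpace ℝ (Fin d)) : ℝ) = (m : ℝ) * d := by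
    rw [Module.finrank_pi_fintype]
    simp [finrank_euclideanSpace_fin]
  have hp : (Module.finrank ℝ (Fin m → EuclideanSpace ℝ (Fin d)) : ℝ) < p := by
    rw [hrank, hp_def]; linarith
  haveI : (volume : Measure (Fin m → EuclideanSpace ℝ (Fin d))).IsAddHaarMeasure := ⟨⟩
  obtain ⟨C0, hC0, hC0int⟩ :=
    aux_tail_integral (volume : Measure (Fin m → EuclideanSpace ℝ (Fin d))) hp
  refine ⟨2 * CK * (C0 + 1), by positivity, ?_⟩
  intro w t a g k ht ha hg hgk x hx y hy
  set c : Fin m → EuclideanSpace ℝ (Fin d) := fun _ => w with hc_def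
  have ha0 : 0 < a := lt_of_lt_of_le zero_lt_two ha
  have hR : 0 < a * t := mul_pos ha0 ht
  obtain ⟨hInt, hIntval⟩ := hC0int (a * t) hR
  -- norm bounds
  have hnormle : ∀ X : Fin m → EuclideanSpace ℝ (Fin d), ∀ j, ‖w - X j‖ ≤ Real.sqrt (∑ i, ‖w - X i‖ ^ 2) := by
    intro X j
    rw [show ‖w - X j‖ = Real.sqrt (‖w - X j‖ ^ 2) from
      (Real.sqrt_sq (norm_nonneg _)).symm]
    exact Real.sqrt_le_sqrt (Finset.single_le_sum
      (fun i _ => sq_nonneg ‖w - X i‖) (Finset.mem_univ j))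
  have hXc : ∀ X : Fin m → EuclideanSpace ℝ (Fin d), ‖X - c‖ ≤ Real.sqrt (∑ i, ‖w - X i‖ ^ 2) := by
    intro X
    refine (pi_norm_le_iff_of_nonneg (Real.sqrt_nonneg _)).2 fun j => ?_
    rw [show (X - c) j = X j - w from rfl, norm_sub_rev]
    exact hnormle X j
  -- the key kernel oscillation bound
  have key : ∀ z ∈ ball w t, ∀ X : Fin m → EuclideanSpace ℝ (Fin d), a * t ≤ ‖X k - w‖ →
      ‖K z X - K w X‖ ≤ CK * t ^ δ * ‖X - c‖ ^ (-p) := by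
    intro z hz X hXk
    set S : ℝ := Real.sqrt (∑ i, ‖w - X i‖ ^ 2) with hS_def
    have hzw : ‖z - w‖ < t := by rwa [mem_ball, dist_eq_norm] at hz
    have hatS : a * t ≤ S := le_trans (by rwa [norm_sub_rev] at hXk) (hnormle X k)
    have hcond : 2 * ‖z - w‖ ≤ S := by
      have h2t : 2 * t ≤ a * t := by nlinarith
      nlinarith [norm_nonneg (z - w)]
    have hKb := hK w (z - w) X hcond
    rw [show w + (z - w) = z from by abel] at hKb
    have hXcpos : 0 < ‖X - c‖ := by
      have h1 : a * t ≤ ‖(X - c) k‖ := by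
        rw [show (X - c) k = X k - w from rfl]; exact hXk
      have h2 := norm_le_pi_norm (X - c) k
      linarith
    have hSpow : S ^ (-p) ≤ ‖X - c‖ ^ (-p) :=
      Real.rpow_le_rpow_of_nonpos hXcpos (hXc X) (neg_nonpos.2 hp0.le)
    have hhδ : ‖z - w‖ ^ δ ≤ t ^ δ :=
      Real.rpow_le_rpow (norm_nonneg _) hzw.le hδ.le
    calc ‖K z X - K w X‖ ≤ CK * ‖z - w‖ ^ δ * S ^ (-p) := hKb
      _ ≤ CK * t ^ δ * ‖X - c‖ ^ (-p) := by
          apply mul_le_mul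
          · exact mul_le_mul_of_nonneg_left hhδ hCK.le
          · exact hSpow
          · exact Real.rpow_nonneg (Real.sqrt_nonneg _) _
          · exact mul_nonneg hCK.le (Real.rpow_nonneg ht.le _)
  -- pointwise domination
  set G : (Fin m → EuclideanSpace ℝ (Fin d)) → ℝ := fun X =>
    (2 * CK * t ^ δ) * ({Z : Fin m → EuclideanSpace ℝ (Fin d) | a * t ≤ ‖Z‖}.indicator (fun Z => ‖Z‖ ^ (-p)) (X - c))
    with hG_def
  have hGnonneg : ∀ X, 0 ≤ G X := by
    intro X
    have : (0:ℝ) ≤ {Z : Fin m → EuclideanSpace ℝ (Fin d) | a * t ≤ ‖Z‖}.indicator (fun Z => ‖Z‖ ^ (-p)) (X - c) :=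
      Set.indicator_nonneg (fun v _ => Real.rpow_nonneg (norm_nonneg v) _) _
    positivity
  have hdom : ∀ X : Fin m → EuclideanSpace ℝ (Fin d), ‖(K x X - K y X) * ∏ j, g j (X j)‖ ≤ G X := by
    intro X
    by_cases hXk : a * t ≤ ‖X k - w‖
    · have hmem : X - c ∈ {Z : Fin m → EuclideanSpace ℝ (Fin d) | a * t ≤ ‖Z‖} := by
        have h1 : a * t ≤ ‖(X - c) k‖ := by
          rw [show (X - c) k = X k - w from rfl]; exact hXk
        exact le_trans h1 (norm_le_pi_norm (X - c) k)
      have hGX : G X = (2 * CK * t ^ δ) * ‖X - c‖ ^ (-p) := by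
        rw [hG_def]; simp only []
        rw [Set.indicator_of_mem hmem]
      have hprod : ‖∏ j, g j (X j)‖ ≤ 1 := by
        rw [norm_prod]
        exact Finset.prod_le_one (fun j _ => norm_nonneg _) (fun j _ => hg j (X j))
      have hKxy : ‖K x X - K y X‖ ≤ 2 * (CK * t ^ δ * ‖X - c‖ ^ (-p)) := by
        have h1 := key x hx X hXk
        have h2 := key y hy X hXk
        have h3 : K x X - K y X = (K x X - K w X) - (K y X - K w X) := by ring
        calc ‖K x X - K y X‖ = ‖(K x X - K w X) - (K y X - K w X)‖ := by rw [← h3]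
          _ ≤ ‖K x X - K w X‖ + ‖K y X - K w X‖ := norm_sub_le _ _
          _ ≤ 2 * (CK * t ^ δ * ‖X - c‖ ^ (-p)) := by linarith
      calc ‖(K x X - K y X) * ∏ j, g j (X j)‖
          = ‖K x X - K y X‖ * ‖∏ j, g j (X j)‖ := norm_mul _ _
        _ ≤ (2 * (CK * t ^ δ * ‖X - c‖ ^ (-p))) * 1 := by
            apply mul_le_mul hKxy hprod (norm_nonneg _) (by positivity)
        _ = G X := by rw [hGX]; ring
    · have hz : g k (X k) = 0 := hgk (X k) (lt_of_not_ge hXk)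
      have : (∏ j, g j (X j)) = 0 := Finset.prod_eq_zero (Finset.mem_univ k) hz
      rw [this, mul_zero, norm_zero]
      exact hGnonneg X
  -- integrability of G
  have hGint : Integrable G := by
    rw [hG_def]
    exact (hInt.comp_sub_right c).const_mul _
  -- value of the integral of G
  have hGval : ∫ X : Fin m → EuclideanSpace ℝ (Fin d), G X = 2 * CK * C0 * a ^ (-δ) := by
    rw [hG_def]
    rw [integral_const_mul]
    rw [integral_sub_right_eq_self
      ({Z : Fin m → EuclideanSpace ℝ (Fin d) | a * t ≤ ‖Z‖}.indicator (fun Z => ‖Z‖ ^ (-p))) c]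
    rw [hIntval]
    have hexp : (Module.finrank ℝ (Fin m → EuclideanSpace ℝ (Fin d)) : ℝ) - p = -δ := by rw [hrank, hp_def]; ring
    rw [hexp, Real.mul_rpow ha0.le ht.le]
    have htδ : t ^ δ * t ^ (-δ) = 1 := by
      rw [← Real.rpow_add ht]; simp
    calc 2 * CK * t ^ δ * (C0 * (a ^ (-δ) * t ^ (-δ)))
        = 2 * CK * C0 * a ^ (-δ) * (t ^ δ * t ^ (-δ)) := by ring
      _ = 2 * CK * C0 * a ^ (-δ) := by rw [htδ, mul_one]
  -- conclude
  calc ‖∫ X : Fin m → EuclideanSpace ℝ (Fin d), (K x X - K y X) * ∏ j, g j (X j)‖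
      ≤ ∫ X : Fin m → EuclideanSpace ℝ (Fin d), ‖(K x X - K y X) * ∏ j, g j (X j)‖ := norm_integral_le_integral_norm _
    _ ≤ ∫ X : Fin m → EuclideanSpace ℝ (Fin d), G X := integral_mono_of_nonneg
        (Filter.Eventually.of_forall fun X => norm_nonneg _) hGint
        (Filter.Eventually.of_forall hdom)
    _ = 2 * CK * C0 * a ^ (-δ) := hGval
    _ ≤ 2 * CK * (C0 + 1) * a ^ (-δ) := by
        have : (0:ℝ) ≤ a ^ (-δ) := Real.rpow_nonneg ha0.le _
        nlinarith
end
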